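/- Let μ be a boundedly finite Borel measure on E = [0,∞)² ∖ {(0,0)} that is homogeneous of degree −1, fix p ∈ [1,∞], let Φ_p be the spectral measure of μ with respect to the L_p norm, and let Λ = ι_*μ be the pushforward of μ under ι(z₁,z₂) = (1/z₁, 1/z₂) (with 1/0 = ∞). Then Φ_p([0,θ]) = Λ(C_{p,θ}) for every θ ∈ [0,π/2], where C_{p,0} = ([0,∞]×{0}) ∪ ({∞}×[0,1]), C_{p,θ} = {(x,y) ∈ [0,∞]² : y ≤ min(x·tanθ, y_p(x))} for θ ∈ (0,π/2), and C_{p,π/2} = {(x,y) ∈ [0,∞]² : y ≤ y_p(x)}. -/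

import Mathlib

open MeasureTheory Set Real Filter Topology
open scoped ENNReal Pointwise

noncomputable section

/-- The cone `E = [0,∞)² \ {(0,0)}` as a subset of `ℝ²`. -/
def Econe : Set (ℝ × ℝ) := (Ici 0 ×ˢ Ici 0) \ {((0 : ℝ), (0 : ℝ))}

/-- The angular coordinate `θ(z) = arctan (z₁ / z₂)`, with `θ(z) = π/2` when `z₂ = 0`. -/
def ang (z : ℝ × ℝ) : ℝ := if z.2 = 0 then π / 2 else Real.arctan (z.1 / z.2)

/-- The `L_p` norm on `ℝ²`, for `p ∈ [1,∞]`. -/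
def lpnorm (p : ℝ≥0∞) (z : ℝ × ℝ) : ℝ :=
  if p = ⊤ then max |z.1| |z.2|
  else (|z.1| ^ p.toReal + |z.2| ^ p.toReal) ^ (1 / p.toReal)

/-- The function `y_p : [0,∞] → [0,∞]`: for `p < ∞`, `y_p(x) = ∞` on `[0,1]`,
`y_p(x) = (1 + 1/(x^p - 1))^{1/p}` on `(1,∞)` and `y_p(∞) = 1`; for `p = ∞`,
`y_∞(x) = ∞` on `[0,1)` and `y_∞(x) = 1` on `[1,∞]`. -/
def ypE (p : ℝ≥0∞) (x : ℝ≥0∞) : ℝ≥0∞ :=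
  if p = ⊤ then (if x < 1 then ⊤ else 1)
  else if x ≤ 1 then ⊤
  else if x = ⊤ then 1
  else ENNReal.ofReal ((1 + 1 / (x.toReal ^ p.toReal - 1)) ^ (1 / p.toReal))

/-- The region `C_{p,θ} ⊆ [0,∞]²`. -/
def Cpset (p : ℝ≥0∞) (θ : ℝ) : Set (ℝ≥0∞ × ℝ≥0∞) :=
  if θ = 0 then (univ ×ˢ {0}) ∪ ({⊤} ×ˢ Iic 1)
  else if θ = π / 2 then {q | q.2 ≤ ypE p q.1}
  else {q | q.2 ≤ min (q.1 * ENNReal.ofReal (Real.tan θ)) (ypE p q.1)}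

/-- The coordinatewise inversion `ι(z₁,z₂) = (1/z₁, 1/z₂)`, with values in `[0,∞]²`
and the convention `1/0 = ∞`. -/
def iota (z : ℝ × ℝ) : ℝ≥0∞ × ℝ≥0∞ := ((ENNReal.ofReal z.1)⁻¹, (ENNReal.ofReal z.2)⁻¹)

/-!
Pointwise on `E`, the condition `ι z ∈ C_{p,θ}` unwinds to `‖z‖_p ≥ 1 ∧ θ(z) ≤ θ`: at
`(x, y) = ι z` the bound `y ≤ y_p(x)` becomes `z₁^p + z₂^p ≥ 1` (as `y_p(1/a) = (1 - a^p)^{-1/p}`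
for `0 < a < 1`), and `y ≤ x tan θ` becomes `z₁ ≤ z₂ tan θ`. The one exception is `p = ∞` on the
line `z₁ = 1`, where `y_∞(1) = 1`. That line is `μ`-null by homogeneity: its dilates by `c > 1`
are uncountably many disjoint sets of mass `c⁻¹ μ(line)`, all inside the region
`max z₁ z₂ ≥ 1` of finite measure.
-/

lemma mem_Econe {z : ℝ × ℝ} : z ∈ Econe ↔ 0 ≤ z.1 ∧ 0 ≤ z.2 ∧ z ≠ 0 := by
  simp only [Econe, Set.mem_sdiff, mem_prod, mem_Ici, mem_singleton_iff, Prod.zero_eq_mk,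
    and_assoc]

lemma measurableSet_Econe : MeasurableSet Econe :=
  (measurableSet_Ici.prod measurableSet_Ici).diff (measurableSet_singleton _)

lemma ang_nonneg {z : ℝ × ℝ} (hz : z ∈ Econe) : 0 ≤ ang z := by
  obtain ⟨ha, hb, -⟩ := mem_Econe.mp hz
  unfold ang
  split_ifs
  · positivity
  · exact arctan_nonneg.2 (div_nonneg ha hb)

lemma ang_le_pi_div_two (z : ℝ × ℝ) : ang z ≤ π / 2 := by
  unfold ang
  split_ifs
  exacts [le_rfl, (arctan_lt_pi_div_two _).le]

lemma ang_le_iff {θ : ℝ} (hθ₀ : 0 ≤ θ) (hθ : θ < π / 2) {z : ℝ × ℝ} (hz : z ∈ Econe) :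
    ang z ≤ θ ↔ z.1 ≤ z.2 * tan θ := by
  obtain ⟨ha, hb, hz₀⟩ := mem_Econe.mp hz
  rcases hb.eq_or_lt with hb | hb
  · have ha : 0 < z.1 := ha.lt_of_ne fun h => hz₀ (Prod.ext h.symm hb.symm)
    simp only [ang, ← hb, if_true, zero_mul]
    constructor <;> intro h <;> linarith
  · rw [ang, if_neg hb.ne', ← arctan_tan (by linarith [pi_pos]) hθ, arctan_le_arctan_iff,
      arctan_tan (by linarith [pi_pos]) hθ, div_le_iff₀' hb]

lemma ypE_apply_top (p : ℝ≥0∞) : ypE p ⊤ = 1 := by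
  simp [ypE]

lemma ypE_top_inv_ofReal (a : ℝ) : ypE ⊤ (ENNReal.ofReal a)⁻¹ = if 1 < a then ⊤ else 1 := by
  simp [ypE, ENNReal.inv_lt_one, ENNReal.one_lt_ofReal]

lemma ypE_inv_ofReal_of_one_le {p : ℝ≥0∞} (hp : p ≠ ⊤) {a : ℝ} (ha : 1 ≤ a) :
    ypE p (ENNReal.ofReal a)⁻¹ = ⊤ := by
  simp [ypE, hp, ENNReal.inv_le_one, ENNReal.one_le_ofReal, ha]

lemma ypE_inv_ofReal_of_pos_of_lt_one {p : ℝ≥0∞} (hr : 0 < p.toReal) {a : ℝ} (ha₀ : 0 < a)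
    (ha₁ : a < 1) :
    ypE p (ENNReal.ofReal a)⁻¹ = (ENNReal.ofReal ((1 - a ^ p.toReal) ^ p.toReal⁻¹))⁻¹ := by
  have hp : p ≠ ⊤ := (ENNReal.toReal_pos_iff.1 hr).2.ne
  have hx : ¬(ENNReal.ofReal a)⁻¹ ≤ 1 := by
    rw [ENNReal.inv_le_one, ENNReal.one_le_ofReal]; linarith
  have har : a ^ p.toReal < 1 := rpow_lt_one ha₀.le ha₁ hr
  have key : 1 + 1 / ((a ^ p.toReal)⁻¹ - 1) = (1 - a ^ p.toReal)⁻¹ := by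
    have : 1 - a ^ p.toReal ≠ 0 := by linarith
    field_simp
    ring
  rw [ypE, if_neg hp, if_neg hx, if_neg (by simpa using ha₀),
    ← ENNReal.ofReal_inv_of_pos ha₀, ENNReal.toReal_ofReal (by positivity), inv_rpow ha₀.le,
    key, inv_rpow (by linarith), ENNReal.ofReal_inv_of_pos (rpow_pos_of_pos (by linarith) _),
    one_div]

lemma inv_ofReal_le_ypE_top_iff (a b : ℝ) :
    (ENNReal.ofReal b)⁻¹ ≤ ypE ⊤ (ENNReal.ofReal a)⁻¹ ↔ 1 < a ∨ 1 ≤ b := by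
  rw [ypE_top_inv_ofReal]
  split_ifs with ha
  · simp [ha]
  · simp [ha, ENNReal.inv_le_one, ENNReal.one_le_ofReal]

lemma inv_ofReal_le_ypE_iff {p : ℝ≥0∞} (hr : 0 < p.toReal) {a b : ℝ} (ha : 0 ≤ a) (hb : 0 ≤ b) :
    (ENNReal.ofReal b)⁻¹ ≤ ypE p (ENNReal.ofReal a)⁻¹ ↔ 1 ≤ a ^ p.toReal + b ^ p.toReal := by
  have hp : p ≠ ⊤ := (ENNReal.toReal_pos_iff.1 hr).2.ne
  rcases le_or_gt 1 a with ha₁ | ha₁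
  · simp only [ypE_inv_ofReal_of_one_le hp ha₁, le_top, true_iff]
    linarith [one_le_rpow ha₁ hr.le, rpow_nonneg hb p.toReal]
  rcases ha.eq_or_lt with rfl | ha₀
  · rw [ENNReal.ofReal_zero, ENNReal.inv_zero, ypE_apply_top, zero_rpow hr.ne', zero_add,
      ENNReal.inv_le_one, ENNReal.one_le_ofReal]
    simpa using (rpow_le_rpow_iff zero_le_one hb hr).symm
  · have hc : 0 ≤ 1 - a ^ p.toReal := by linarith [rpow_lt_one ha ha₁ hr]
    rw [ypE_inv_ofReal_of_pos_of_lt_one hr ha₀ ha₁, ENNReal.inv_le_inv,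
      ENNReal.ofReal_le_ofReal_iff hb, rpow_inv_le_iff_of_pos hc hb hr]
    constructor <;> intro h <;> linarith

lemma one_le_lpnorm_top_iff (z : ℝ × ℝ) : 1 ≤ lpnorm ⊤ z ↔ 1 ≤ |z.1| ∨ 1 ≤ |z.2| := by
  simp [lpnorm]

lemma one_le_lpnorm_iff {p : ℝ≥0∞} (hr : 0 < p.toReal) (z : ℝ × ℝ) :
    1 ≤ lpnorm p z ↔ 1 ≤ |z.1| ^ p.toReal + |z.2| ^ p.toReal := by
  have hp : p ≠ ⊤ := (ENNReal.toReal_pos_iff.1 hr).2.ne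
  rw [lpnorm, if_neg hp, one_div, le_rpow_inv_iff_of_pos zero_le_one (by positivity) hr, one_rpow]

lemma inv_ofReal_le_ypE_iff_one_le_lpnorm {p : ℝ≥0∞} (hp : 1 ≤ p) {z : ℝ × ℝ} (h₁ : 0 ≤ z.1)
    (h₂ : 0 ≤ z.2) (hz₁ : z.1 ≠ 1) :
    (ENNReal.ofReal z.2)⁻¹ ≤ ypE p (ENNReal.ofReal z.1)⁻¹ ↔ 1 ≤ lpnorm p z := by
  rcases eq_or_ne p ⊤ with rfl | hpt
  · rw [inv_ofReal_le_ypE_top_iff, one_le_lpnorm_top_iff, abs_of_nonneg h₁,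
      abs_of_nonneg h₂, hz₁.symm.le_iff_lt]
  · have hr : 0 < p.toReal := ENNReal.toReal_pos (by positivity) hpt
    rw [inv_ofReal_le_ypE_iff hr h₁ h₂, one_le_lpnorm_iff hr, abs_of_nonneg h₁, abs_of_nonneg h₂]

lemma inv_ofReal_le_inv_ofReal_mul_iff {a b t : ℝ} (ha : 0 ≤ a) (hb : 0 ≤ b) (hab : (a, b) ≠ 0)
    (ht : 0 < t) :
    (ENNReal.ofReal b)⁻¹ ≤ (ENNReal.ofReal a)⁻¹ * ENNReal.ofReal t ↔ a ≤ b * t := by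
  rcases ha.eq_or_lt with rfl | ha
  · simp [ENNReal.top_mul, ht, mul_nonneg hb ht.le]
  rcases hb.eq_or_lt with rfl | hb
  · simp [ENNReal.mul_eq_top, ha.not_ge]
  rw [← ENNReal.ofReal_inv_of_pos ha, ← ENNReal.ofReal_inv_of_pos hb,
    ← ENNReal.ofReal_mul (by positivity), ENNReal.ofReal_le_ofReal_iff (by positivity),
    inv_mul_eq_div, le_div_iff₀ ha, ← div_eq_inv_mul, div_le_iff₀ hb, mul_comm]

lemma iota_mem_Cpset_iff (p : ℝ≥0∞) {θ : ℝ} (hθ : θ ∈ Icc 0 (π / 2)) {z : ℝ × ℝ}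
    (hz : z ∈ Econe) :
    iota z ∈ Cpset p θ ↔ (ENNReal.ofReal z.2)⁻¹ ≤ ypE p (ENNReal.ofReal z.1)⁻¹ ∧ ang z ≤ θ := by
  obtain ⟨h₁, h₂, hz₀⟩ := mem_Econe.mp hz
  rcases hθ.1.eq_or_lt with rfl | hθ₀
  · rw [ang_le_iff le_rfl (by positivity) hz, tan_zero, mul_zero]
    simp only [Cpset, if_true, iota, mem_union, mem_prod, mem_univ, mem_singleton_iff,
      mem_Iic, true_and, ENNReal.inv_eq_zero, ENNReal.ofReal_ne_top, false_or,
      ENNReal.inv_eq_top, ENNReal.ofReal_eq_zero]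
    rw [and_comm]
    refine and_congr_left fun ha => ?_
    rw [ENNReal.ofReal_of_nonpos ha, ENNReal.inv_zero, ypE_apply_top]
  rcases hθ.2.eq_or_lt with rfl | hθ₁
  · simp [Cpset, hθ₀.ne', iota, ang_le_pi_div_two]
  · simp only [Cpset, hθ₀.ne', hθ₁.ne, if_false, mem_ofPred_eq, iota, le_min_iff,
      inv_ofReal_le_inv_ofReal_mul_iff h₁ h₂ hz₀ (tan_pos_of_pos_of_lt_pi_div_two hθ₀ hθ₁),
      ang_le_iff hθ₀.le hθ₁ hz]
    exact and_comm

lemma measurable_iota : Measurable iota :=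
  (ENNReal.measurable_ofReal.comp measurable_fst).inv.prodMk
    (ENNReal.measurable_ofReal.comp measurable_snd).inv

lemma measurable_ypE (p : ℝ≥0∞) : Measurable (ypE p) := by
  unfold ypE
  split_ifs
  · exact Measurable.ite measurableSet_Iio measurable_const measurable_const
  · refine Measurable.ite measurableSet_Iic measurable_const
      (Measurable.ite (measurableSet_singleton ⊤) measurable_const ?_)
    fun_prop

lemma measurableSet_Cpset (p : ℝ≥0∞) (θ : ℝ) : MeasurableSet (Cpset p θ) := by
  have hy : Measurable fun q : ℝ≥0∞ × ℝ≥0∞ => ypE p q.1 := (measurable_ypE p).comp measurable_fst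
  unfold Cpset
  split_ifs
  · exact (MeasurableSet.univ.prod (measurableSet_singleton 0)).union
      ((measurableSet_singleton ⊤).prod measurableSet_Iic)
  · exact measurableSet_le measurable_snd hy
  · exact measurableSet_le measurable_snd ((measurable_fst.mul measurable_const).min hy)

lemma measure_fst_eq_one_eq_zero (μ : Measure (ℝ × ℝ))
    (hfin : μ {z | z ∈ Econe ∧ 1 ≤ max z.1 z.2} ≠ ⊤)
    (hhom : ∀ B : Set (ℝ × ℝ), B ⊆ Econe → MeasurableSet B → ∀ c > (0 : ℝ),
      μ (c • B) = ENNReal.ofReal c⁻¹ * μ B) :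
    μ {z | z ∈ Econe ∧ z.1 = 1} = 0 := by
  set B := {z : ℝ × ℝ | z ∈ Econe ∧ z.1 = 1}
  have hB : MeasurableSet B :=
    measurableSet_Econe.inter (measurableSet_eq_fun measurable_fst measurable_const)
  have hsmul : ∀ c > (0 : ℝ), c • B ⊆ {z | z ∈ Econe ∧ z.1 = c} := by
    rintro c hc _ ⟨w, ⟨hw, hw₁⟩, rfl⟩
    obtain ⟨-, hw₂, -⟩ := mem_Econe.1 hw
    have h₁ : (c • w).1 = c := by simp [hw₁]
    refine ⟨mem_Econe.2 ⟨by rw [h₁]; exact hc.le, by simpa using mul_nonneg hc.le hw₂,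
      fun h => hc.ne' (h₁.symm.trans (congrArg Prod.fst h))⟩, h₁⟩
  have hpos : ∀ c : Ioi (1 : ℝ), (0 : ℝ) < c := fun c => one_pos.trans c.2
  have hcount := Measure.countable_meas_pos_of_disjoint_of_meas_iUnion_ne_top μ
    (As := fun c : Ioi (1 : ℝ) => (c : ℝ) • B) (fun c => hB.const_smul₀ _)
    (fun c d hcd => Set.disjoint_left.2 fun z hzc hzd => hcd <| Subtype.ext <|
      ((hsmul c (hpos c) hzc).2.symm.trans (hsmul d (hpos d) hzd).2))
    (ne_top_of_le_ne_top hfin <| measure_mono <| iUnion_subset fun c z hz =>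
      let h := hsmul c (hpos c) hz
      ⟨h.1, le_max_of_le_left (h.2 ▸ c.2.le)⟩)
  by_contra hB₀
  have hall : {c : Ioi (1 : ℝ) | 0 < μ ((c : ℝ) • B)} = univ := by
    refine eq_univ_of_forall fun c => ?_
    rw [mem_ofPred_eq, hhom B (fun _ h => h.1) hB c (hpos c)]
    exact ENNReal.mul_pos (by simpa using hpos c) hB₀
  rw [hall, countable_univ_iff, countable_coe_iff] at hcount
  simpa using hcount.measure_zero volume

theorem stmt9 (μ : Measure (ℝ × ℝ)) (hμE : μ Econeᶜ = 0)
    (hbf : ∀ ε > (0 : ℝ), μ {z | z ∈ Econe ∧ ε ≤ max z.1 z.2} < ⊤)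
    (hhom : ∀ B : Set (ℝ × ℝ), B ⊆ Econe → MeasurableSet B → ∀ c > (0 : ℝ),
      μ (c • B) = ENNReal.ofReal c⁻¹ * μ B)
    (p : ℝ≥0∞) (hp : 1 ≤ p)
    (Φ : Measure ℝ)
    (hΦ : ∀ B : Set ℝ, MeasurableSet B →
      Φ B = μ {z | z ∈ Econe ∧ 1 ≤ lpnorm p z ∧ ang z ∈ B})
    (Λ : Measure (ℝ≥0∞ × ℝ≥0∞)) (hΛ : Λ = μ.map iota) :
    ∀ θ ∈ Icc (0 : ℝ) (π / 2), Φ (Icc 0 θ) = Λ (Cpset p θ) := by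
  intro θ hθ
  have hE : ∀ᵐ z ∂μ, z ∈ Econe := mem_ae_iff.2 hμE
  have hfst : ∀ᵐ z ∂μ, z ∈ Econe → z.1 ≠ 1 := by
    rw [ae_iff]
    simpa using measure_fst_eq_one_eq_zero μ (hbf 1 one_pos).ne hhom
  rw [hΦ _ measurableSet_Icc, hΛ, Measure.map_apply measurable_iota (measurableSet_Cpset p θ)]
  refine measure_congr (eventuallyEq_set.2 ?_)
  filter_upwards [hE, hfst] with z hz hz₁
  obtain ⟨h₁, h₂, -⟩ := mem_Econe.1 hz
  rw [mem_preimage, iota_mem_Cpset_iff p hθ hz,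
    inv_ofReal_le_ypE_iff_one_le_lpnorm hp h₁ h₂ (hz₁ hz)]
  simp [hz, ang_nonneg hz]
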